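/- arXiv:1101.1938 — 7 statements merged into one kernel-verified Lean document; each statement's English description precedes it below -/
import Mathlib

section
/- Let $A$ be a commutative ring, $\Phi$ a $q\times p$ matrix over $A$ in block form $\begin{bmatrix}\alpha & \beta\\ \gamma & \delta\end{bmatrix}$ with $\alpha$ of size $r\times r$, and let $I$ be an ideal of $A$. If all entries of $(\det\alpha)\cdot\delta - \gamma\,\alpha^{\#}\beta$ lie in $I$, then all $(r+1)\times(r+1)$ minors of $(\det\alpha)\cdot\Phi$ lie in $I$. -/
/-!
With `g = det α` and `α# = adjugate α`, one has `α * α# = g • 1`, so as soon as the Schur-type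
complement `g • δ - γ * α# * β` vanishes,
`g • [[α, β], [γ, δ]] = [α; γ] * [g • 1, α# * β]` factors through a free module of rank `r`,
and every minor of size `r + 1` of such a product is zero. Apply this over `A ⧸ I`.
-/

open Matrix

namespace Matrix

variable {R : Type*} [CommRing R]

theorem det_mul_eq_zero_of_card_lt {m k : Type*} [Fintype m] [DecidableEq m] [Fintype k]
    (P : Matrix m k R) (Q : Matrix k m R) (h : Fintype.card k < Fintype.card m) :
    (P * Q).det = 0 := by
  -- pad `P` with zero columns and `Q` with zero rows to square matrices
  let l := Fin (Fintype.card m - Fintype.card k)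
  let e : m ≃ k ⊕ l := Fintype.equivOfCardEq (by simp [l]; omega)
  have hpad : P * Q = (fromCols P (0 : Matrix m l R)).submatrix id e *
      (fromRows Q (0 : Matrix l m R)).submatrix e id := by
    rw [submatrix_mul_equiv, fromCols_mul_fromRows, Matrix.zero_mul, add_zero, submatrix_id_id]
  have hzero : ((fromCols P (0 : Matrix m l R)).submatrix id e).det = 0 :=
    det_eq_zero_of_column_eq_zero (e.symm (.inr ⟨0, by omega⟩)) fun i => by simp
  rw [hpad, det_mul, hzero, zero_mul]

theorem det_submatrix_mul_eq_zero_of_card_lt {m n k l : Type*} [Fintype k] [Fintype l]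
    [DecidableEq l] (P : Matrix m k R) (Q : Matrix k n R) (rows : l → m) (cols : l → n)
    (h : Fintype.card k < Fintype.card l) :
    ((P * Q).submatrix rows cols).det = 0 := by
  rw [submatrix_mul P Q rows id cols Function.bijective_id]
  exact det_mul_eq_zero_of_card_lt _ _ h

section SchurComplement

variable {r m n : Type*} [Fintype r] [DecidableEq r] (α : Matrix r r R) (β : Matrix r n R)
  (γ : Matrix m r R) (δ : Matrix m n R)

theorem det_smul_fromBlocks_eq_fromRows_mul_fromCols (h : α.det • δ = γ * α.adjugate * β) :
    α.det • fromBlocks α β γ δ = fromRows α γ * fromCols (α.det • 1) (α.adjugate * β) := by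
  rw [fromRows_mul_fromCols, fromBlocks_smul, h, ← Matrix.mul_assoc, mul_adjugate,
    Matrix.smul_mul, Matrix.one_mul, Matrix.mul_smul, Matrix.mul_one, Matrix.mul_smul,
    Matrix.mul_one, Matrix.mul_assoc]

theorem det_submatrix_det_smul_fromBlocks_eq_zero {l : Type*} [Fintype l] [DecidableEq l]
    (h : α.det • δ = γ * α.adjugate * β) (rows : l → r ⊕ m) (cols : l → r ⊕ n)
    (hl : Fintype.card r < Fintype.card l) :
    ((α.det • fromBlocks α β γ δ).submatrix rows cols).det = 0 := by
  rw [det_smul_fromBlocks_eq_fromRows_mul_fromCols α β γ δ h]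
  exact det_submatrix_mul_eq_zero_of_card_lt _ _ _ _ hl

end SchurComplement

end Matrix

/-- If all entries of `(det α)·δ - γ·α#·β` lie in an ideal `I`, then all
`(r+1) × (r+1)` minors of `(det α)·Φ` lie in `I`, where `Φ = [[α,β],[γ,δ]]`. -/
theorem stmt5 {A : Type*} [CommRing A] {r s t : ℕ} (I : Ideal A)
    (α : Matrix (Fin r) (Fin r) A) (β : Matrix (Fin r) (Fin t) A)
    (γ : Matrix (Fin s) (Fin r) A) (δ : Matrix (Fin s) (Fin t) A)
    (h : ∀ i j, (α.det • δ - γ * α.adjugate * β) i j ∈ I) :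
    ∀ (rows : Fin (r + 1) → Fin r ⊕ Fin s) (cols : Fin (r + 1) → Fin r ⊕ Fin t),
      ((α.det • fromBlocks α β γ δ).submatrix rows cols).det ∈ I := by
  intro rows cols
  set f := Ideal.Quotient.mk I
  have hdet : (α.map f).det = f α.det := (f.map_det α).symm
  have hadj : (α.map f).adjugate = α.adjugate.map f := (f.map_adjugate α).symm
  have hschur : (α.map f).det • δ.map f = γ.map f * (α.map f).adjugate * β.map f := by
    have hzero : (α.det • δ - γ * α.adjugate * β).map f = 0 := by
      ext i j
      exact Ideal.Quotient.eq_zero_iff_mem.mpr (h i j)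
    rwa [Matrix.map_sub _ (map_sub f), Matrix.map_mul, Matrix.map_mul, sub_eq_zero,
      Matrix.map_smulₛₗ _ f _ (map_mul f _), ← hdet, ← hadj] at hzero
  have hmap : (α.det • fromBlocks α β γ δ).map f =
      (α.map f).det • fromBlocks (α.map f) (β.map f) (γ.map f) (δ.map f) := by
    rw [← fromBlocks_map, hdet, Matrix.map_smulₛₗ _ f _ (map_mul f _)]
  rw [← Ideal.Quotient.eq_zero_iff_mem, RingHom.map_det, RingHom.mapMatrix_apply,
    ← submatrix_map, hmap]
  exact det_submatrix_det_smul_fromBlocks_eq_zero _ _ _ _ hschur rows cols (by simp)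
end

section
/- Let $A$ be a commutative ring, $\Phi = \begin{bmatrix}\alpha & \beta\\ \gamma & \delta\end{bmatrix}$ a $q\times p$ matrix over $A$ with $\alpha$ of size $r\times r$, $g = \det\alpha$, and view $A^q = A^r \oplus A^l$ with $l = q - r$. Then $g\cdot\big(\mathrm{im}\,\Phi \cap (\{0\}^r \oplus A^l)\big) \subseteq \{0\}^r \oplus \mathrm{im}(g\cdot\delta - \gamma\,\alpha^{\#}\beta) \subseteq \mathrm{im}\,\Phi \cap (\{0\}^r \oplus A^l)$. -/
open Matrix

/-- With `Φ = [[α,β],[γ,δ]]`, `g = det α` and `A^q = A^r ⊕ A^l`: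
`g·(im Φ ∩ ({0}^r ⊕ A^l)) ⊆ {0}^r ⊕ im(g·δ - γ·α#·β) ⊆ im Φ ∩ ({0}^r ⊕ A^l)`. -/
theorem stmt8 {A : Type*} [CommRing A] {r s t : ℕ}
    (α : Matrix (Fin r) (Fin r) A) (β : Matrix (Fin r) (Fin t) A)
    (γ : Matrix (Fin s) (Fin r) A) (δ : Matrix (Fin s) (Fin t) A) :
    (∀ v : Fin r ⊕ Fin s → A, v ∈ LinearMap.range (fromBlocks α β γ δ).mulVecLin →
      (∀ i, v (Sum.inl i) = 0) →
      ∃ η : Fin t → A,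
        α.det • v = Sum.elim (0 : Fin r → A) ((α.det • δ - γ * α.adjugate * β).mulVec η)) ∧
    (∀ η : Fin t → A,
      (Sum.elim (0 : Fin r → A) ((α.det • δ - γ * α.adjugate * β).mulVec η)) ∈
        LinearMap.range (fromBlocks α β γ δ).mulVecLin) := by
  constructor
  · rintro v ⟨w, rfl⟩ h0
    set x := w ∘ Sum.inl with hx
    set y := w ∘ Sum.inr with hy
    have hw : (fromBlocks α β γ δ).mulVecLin w =
        Sum.elim (α.mulVec x + β.mulVec y) (γ.mulVec x + δ.mulVec y) := by
      rw [mulVecLin_apply, fromBlocks_mulVec]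
    refine ⟨y, ?_⟩
    have htop : α.mulVec x + β.mulVec y = 0 := by
      funext i
      have := h0 i
      rw [hw] at this
      exact this
    have hβy : β.mulVec y = -α.mulVec x := by
      rw [eq_neg_iff_add_eq_zero, add_comm]; exact htop
    have hrhs : (α.det • δ - γ * α.adjugate * β).mulVec y =
        α.det • (γ.mulVec x + δ.mulVec y) := by
      rw [sub_mulVec, smul_mulVec, ← mulVec_mulVec, ← mulVec_mulVec, hβy,
        mulVec_neg, mulVec_mulVec, adjugate_mul, smul_mulVec, one_mulVec,
        mulVec_neg, mulVec_smul, sub_neg_eq_add, smul_add]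
      abel
    funext i
    cases i with
    | inl i =>
      have := h0 i
      simp only [Pi.smul_apply, Sum.elim_inl, Pi.zero_apply, this, smul_zero]
    | inr i =>
      rw [hw]
      simp only [Pi.smul_apply, Sum.elim_inr, hrhs, Pi.smul_apply]
  · intro η
    refine ⟨Sum.elim (-(α.adjugate * β).mulVec η) (α.det • η), ?_⟩
    rw [mulVecLin_apply, fromBlocks_mulVec]
    have hl : (Sum.elim (-(α.adjugate * β).mulVec η) (α.det • η) ∘ Sum.inl)
        = -(α.adjugate * β).mulVec η := rfl
    have hr : (Sum.elim (-(α.adjugate * β).mulVec η) (α.det • η) ∘ Sum.inr)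
        = α.det • η := rfl
    rw [hl, hr]
    have h1 : α *ᵥ -((α.adjugate * β) *ᵥ η) + β *ᵥ α.det • η = 0 := by
      rw [mulVec_neg, mulVec_mulVec, ← Matrix.mul_assoc, mul_adjugate, Matrix.smul_mul,
        Matrix.one_mul, smul_mulVec, mulVec_smul]
      abel
    have h2 : γ *ᵥ -((α.adjugate * β) *ᵥ η) + δ *ᵥ α.det • η
        = (α.det • δ - γ * α.adjugate * β) *ᵥ η := by
      rw [sub_mulVec, smul_mulVec, mulVec_neg, mulVec_mulVec, ← Matrix.mul_assoc,
        mulVec_smul]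
      abel
    rw [h1, h2]
end

section
/- Let $A$ be a commutative ring, $J'$ an ideal of $A$, $\Phi = \begin{bmatrix}\alpha & \beta\\ \gamma & \delta\end{bmatrix}$ a $q\times p$ matrix over $A$ with $\alpha$ of size $r\times r$ and $g = \det\alpha$. For $\eta \in A^{p-r}$, if there exists $\xi \in A^r$ with $\alpha\xi + \beta\eta \in J'\cdot A^r$ and $\gamma\xi + \delta\eta \in J'\cdot A^{q-r}$, then $(\alpha^{\#}\beta)(\eta) \in g\cdot A^r + J'\cdot A^r$ and $(g\delta - \gamma\alpha^{\#}\beta)(\eta) \in J'\cdot A^{q-r}$. Conversely, if $(\alpha^{\#}\beta)(\eta) \in g\cdot A^r + J'\cdot A^r$ and $(g\delta - \gamma\alpha^{\#}\beta)(\eta) \in J'\cdot A^{q-r}$, then there exists $\xi \in A^r$ with $g\cdot(\alpha\xi + \beta\eta) \in J'\cdot A^r$ and $g\cdot(\gamma\xi + \delta\eta) \in J'\cdot A^{q-r}$. -/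
open Matrix

lemma memJ {A : Type*} [CommRing A] (J' : Ideal A) {m n : ℕ}
    (M : Matrix (Fin m) (Fin n) A) (v : Fin n → A) (hv : ∀ j, v j ∈ J') (i : Fin m) :
    M.mulVec v i ∈ J' := by
  simp only [mulVec, dotProduct]
  exact Ideal.sum_mem _ fun j _ => Ideal.mul_mem_left _ _ (hv j)

/-- Membership characterization (algebraic core of Lemma 3.6): for `η ∈ A^{p-r}`,
existence of `ξ` with `αξ + βη ∈ J'·A^r` and `γξ + δη ∈ J'·A^{q-r}` implies
`(α#β)η ∈ g·A^r + J'·A^r` and `(gδ - γα#β)η ∈ J'·A^{q-r}`; conversely those two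
conditions yield `ξ` with `g·(αξ + βη) ∈ J'·A^r` and `g·(γξ + δη) ∈ J'·A^{q-r}`. -/
theorem stmt9 {A : Type*} [CommRing A] (J' : Ideal A) {r s t : ℕ}
    (α : Matrix (Fin r) (Fin r) A) (β : Matrix (Fin r) (Fin t) A)
    (γ : Matrix (Fin s) (Fin r) A) (δ : Matrix (Fin s) (Fin t) A)
    (η : Fin t → A) :
    ((∃ ξ : Fin r → A, (∀ i, (α.mulVec ξ + β.mulVec η) i ∈ J') ∧
        (∀ i, (γ.mulVec ξ + δ.mulVec η) i ∈ J')) →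
      ((∃ τ σ : Fin r → A, (α.adjugate * β).mulVec η = α.det • τ + σ ∧ ∀ i, σ i ∈ J') ∧
        ∀ i, ((α.det • δ - γ * α.adjugate * β).mulVec η) i ∈ J')) ∧
    (((∃ τ σ : Fin r → A, (α.adjugate * β).mulVec η = α.det • τ + σ ∧ ∀ i, σ i ∈ J') ∧
        ∀ i, ((α.det • δ - γ * α.adjugate * β).mulVec η) i ∈ J') →
      ∃ ξ : Fin r → A, (∀ i, α.det * (α.mulVec ξ + β.mulVec η) i ∈ J') ∧
        (∀ i, α.det * (γ.mulVec ξ + δ.mulVec η) i ∈ J')) := by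
  constructor
  · rintro ⟨ξ, h1, h2⟩
    set σ : Fin r → A := α.adjugate.mulVec (α.mulVec ξ + β.mulVec η) with hσdef
    have hσJ : ∀ i, σ i ∈ J' := fun i => memJ J' _ _ h1 i
    have key : (α.adjugate * β).mulVec η = α.det • (-ξ) + σ := by
      have : σ = α.det • ξ + (α.adjugate * β).mulVec η := by
        rw [hσdef, Matrix.mulVec_add, Matrix.mulVec_mulVec, Matrix.adjugate_mul,
          Matrix.mulVec_mulVec]
        simp [Matrix.smul_mulVec, Matrix.one_mulVec]
      rw [this]
      funext i
      simp only [Pi.add_apply, Pi.smul_apply, smul_eq_mul, Pi.neg_apply]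
      ring
    constructor
    · exact ⟨-ξ, σ, key, hσJ⟩
    · intro i
      have e : ((α.det • δ - γ * α.adjugate * β).mulVec η) =
          α.det • (γ.mulVec ξ + δ.mulVec η) - γ.mulVec σ := by
        rw [Matrix.sub_mulVec, Matrix.smul_mulVec, Matrix.mul_assoc,
          ← Matrix.mulVec_mulVec, key]
        funext j
        simp only [Matrix.mulVec_add, Matrix.mulVec_smul, Matrix.mulVec_neg,
          Pi.add_apply, Pi.sub_apply, Pi.smul_apply, Pi.neg_apply, smul_eq_mul]
        ring
      rw [e]
      exact J'.sub_mem (J'.smul_mem _ (h2 i)) (memJ J' γ σ hσJ i)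
  · rintro ⟨⟨τ, σ, hEq, hσJ⟩, h2⟩
    refine ⟨-τ, ?_, ?_⟩
    · intro i
      have e : α.det • (α.mulVec (-τ) + β.mulVec η) = α.mulVec σ := by
        have h : α.mulVec (α.det • τ + σ) = α.det • β.mulVec η := by
          rw [← hEq, Matrix.mulVec_mulVec, ← Matrix.mul_assoc, Matrix.mul_adjugate,
            Matrix.smul_mul, Matrix.one_mul, Matrix.smul_mulVec]
        have h' : α.det • α.mulVec τ + α.mulVec σ = α.det • β.mulVec η := by
          rw [← h, Matrix.mulVec_add, Matrix.mulVec_smul]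
        funext j
        have := congrFun h' j
        simp only [Pi.add_apply, Pi.smul_apply, smul_eq_mul] at this ⊢
        rw [Matrix.mulVec_neg]
        simp only [Pi.add_apply, Pi.neg_apply]
        linear_combination -this
      have := congrFun e i
      simp only [Pi.smul_apply, smul_eq_mul] at this
      rw [this]
      exact memJ J' α σ hσJ i
    · intro i
      set j : Fin s → A := (α.det • δ - γ * α.adjugate * β).mulVec η with hjdef
      have e : α.det • (γ.mulVec (-τ) + δ.mulVec η) = j + γ.mulVec σ := by
        have h : (γ * α.adjugate * β).mulVec η = α.det • γ.mulVec τ + γ.mulVec σ := by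
          rw [Matrix.mul_assoc, ← Matrix.mulVec_mulVec, hEq, Matrix.mulVec_add,
            Matrix.mulVec_smul]
        have hj : j = α.det • δ.mulVec η - (γ * α.adjugate * β).mulVec η := by
          rw [hjdef, Matrix.sub_mulVec, Matrix.smul_mulVec]
        funext k
        have h1 := congrFun h k
        have h2' := congrFun hj k
        simp only [Pi.add_apply, Pi.smul_apply, Pi.sub_apply, smul_eq_mul] at h1 h2' ⊢
        rw [Matrix.mulVec_neg]
        simp only [Pi.add_apply, Pi.neg_apply]
        linear_combination h1 - h2'
      have := congrFun e i
      simp only [Pi.smul_apply, smul_eq_mul] at this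
      rw [this]
      exact J'.add_mem (h2 i) (memJ J' γ σ hσJ i)
end

section
/- Let $R$ be a Noetherian local ring with maximal ideal $\mathfrak{m}$, $A$ an $R$-algebra that is a domain, $J \subseteq \mathfrak{m}$ an ideal of $R$ such that the cancellation property holds ($g\zeta \in J'A$, $g \notin \mathfrak{m}A$ implies $\zeta \in J'A$, for $J' \in \{J, \mathfrak{m}\}$). Let $\Phi = \begin{bmatrix}\alpha & \beta\\ \gamma & \delta\end{bmatrix}$ with $\alpha$ of size $r\times r$, $g = \det\alpha \notin \mathfrak{m}A$, and suppose all entries of $g\delta - \gamma\alpha^{\#}\beta$ lie in $J\cdot A$. Then for $\eta \in A^{p-r}$: $\eta \in \pi_2(\ker_J\Phi)$ if and only if $(\alpha^{\#}\beta)(\eta) \in g\cdot A^r + J\cdot A^r$, where $\pi_2 : A^p = A^r \oplus A^{p-r} \to A^{p-r}$ is the projection and $\ker_J\Phi = \{\zeta \in A^p : \Phi(\zeta) \in J\cdot A^q\}$. -/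
open Matrix IsLocalRing

lemma mulVec_mem_ideal {A : Type*} [CommRing A] {m n : ℕ} (I : Ideal A)
    (M : Matrix (Fin m) (Fin n) A) (v : Fin n → A) (hv : ∀ j, v j ∈ I) (i : Fin m) :
    M.mulVec v i ∈ I := by
  simp only [mulVec, dotProduct]
  exact Ideal.sum_mem _ fun j _ => Ideal.mul_mem_left _ _ (hv j)

lemma mulVec_mem_ideal' {A : Type*} [CommRing A] {m n : ℕ} (I : Ideal A)
    (M : Matrix (Fin m) (Fin n) A) (hM : ∀ i j, M i j ∈ I) (v : Fin n → A) (i : Fin m) :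
    M.mulVec v i ∈ I := by
  simp only [mulVec, dotProduct]
  exact Ideal.sum_mem _ fun j _ => Ideal.mul_mem_right _ _ (hM i j)

/-- Lemma 3.6: under cancellation, with `g = det α ∉ 𝔪A` and all entries of
`g·δ - γ·α#·β` in `J·A`, one has `η ∈ π₂(ker_J Φ)` iff `(α#β)η ∈ g·A^r + J·A^r`. -/
theorem stmt10 {R : Type*} [CommRing R] [IsNoetherianRing R] [IsLocalRing R]
    (J : Ideal R) (hJ : J ≤ maximalIdeal R)
    {A : Type*} [CommRing A] [IsDomain A] [Algebra R A]
    {r s t : ℕ}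
    (α : Matrix (Fin r) (Fin r) A) (β : Matrix (Fin r) (Fin t) A)
    (γ : Matrix (Fin s) (Fin r) A) (δ : Matrix (Fin s) (Fin t) A)
    (hcancel : ∀ J' : Ideal R, (J' = J ∨ J' = maximalIdeal R) →
      ∀ g ζ : A, g ∉ Ideal.map (algebraMap R A) (maximalIdeal R) →
        g * ζ ∈ Ideal.map (algebraMap R A) J' → ζ ∈ Ideal.map (algebraMap R A) J')
    (hg : α.det ∉ Ideal.map (algebraMap R A) (maximalIdeal R))
    (hJA : ∀ i j, (α.det • δ - γ * α.adjugate * β) i j ∈ Ideal.map (algebraMap R A) J)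
    (η : Fin t → A) :
    (∃ ξ : Fin r → A,
        ∀ i, (fromBlocks α β γ δ).mulVec (Sum.elim ξ η) i ∈ Ideal.map (algebraMap R A) J) ↔
      ∃ τ σ : Fin r → A, (α.adjugate * β).mulVec η = α.det • τ + σ ∧
        ∀ i, σ i ∈ Ideal.map (algebraMap R A) J := by
  set JA := Ideal.map (algebraMap R A) J with hJAdef
  constructor
  · rintro ⟨ξ, hξ⟩
    have htop : ∀ i, (α.mulVec ξ + β.mulVec η) i ∈ JA := by
      intro i
      have := hξ (Sum.inl i)
      rwa [fromBlocks_mulVec] at this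
    refine ⟨-ξ, α.adjugate.mulVec (α.mulVec ξ + β.mulVec η), ?_, ?_⟩
    · have h1 : α.adjugate.mulVec (α.mulVec ξ) = α.det • ξ := by
        rw [mulVec_mulVec, adjugate_mul, smul_mulVec, one_mulVec]
      rw [← mulVec_mulVec, mulVec_add, h1, smul_neg]
      abel
    · exact fun i => mulVec_mem_ideal _ _ _ htop i
  · rintro ⟨τ, σ, heq, hσ⟩
    refine ⟨-τ, ?_⟩
    have key : α.det • (β.mulVec η - α.mulVec τ) = α.mulVec σ := by
      have := congrArg (α.mulVec) heq
      rw [mulVec_mulVec, ← Matrix.mul_assoc, mul_adjugate, smul_mul,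
        Matrix.one_mul, mulVec_add, mulVec_smul, smul_mulVec] at this
      rw [smul_sub, this]
      abel
    have htop : ∀ i, (β.mulVec η - α.mulVec τ) i ∈ JA := by
      intro i
      apply hcancel J (Or.inl rfl) α.det _ hg
      have : α.det * (β.mulVec η - α.mulVec τ) i = α.mulVec σ i := by
        rw [← key]; simp [Pi.smul_apply, smul_eq_mul]
      rw [this]
      exact mulVec_mem_ideal _ _ _ hσ i
    have key2 : α.det • (δ.mulVec η - γ.mulVec τ) =
        γ.mulVec σ + (α.det • δ - γ * α.adjugate * β).mulVec η := by
      have h3 : (γ * α.adjugate * β).mulVec η = γ.mulVec (α.det • τ + σ) := by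
        rw [Matrix.mul_assoc, ← mulVec_mulVec, ← heq, mulVec_mulVec, ← Matrix.mul_assoc]
      rw [sub_mulVec, smul_mulVec, h3, mulVec_add, mulVec_smul, smul_sub]
      abel
    have hbot : ∀ i, (δ.mulVec η - γ.mulVec τ) i ∈ JA := by
      intro i
      apply hcancel J (Or.inl rfl) α.det _ hg
      have : α.det * (δ.mulVec η - γ.mulVec τ) i =
          (γ.mulVec σ + (α.det • δ - γ * α.adjugate * β).mulVec η) i := by
        rw [← key2]; simp [Pi.smul_apply, smul_eq_mul]
      rw [this]
      exact Ideal.add_mem _ (mulVec_mem_ideal _ _ _ hσ i)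
        (mulVec_mem_ideal' _ _ hJA η i)
    intro i
    rw [fromBlocks_mulVec]
    cases i with
    | inl i =>
      have := htop i
      simpa [mulVec_neg, sub_eq_add_neg, add_comm] using this
    | inr i =>
      have := hbot i
      simpa [mulVec_neg, sub_eq_add_neg, add_comm] using this
end

section
/- Let $A$ be a commutative ring, $F$ an $A$-module with presentation $A^p \xrightarrow{\Phi} A^q \xrightarrow{\Psi} F \to 0$, where $\Phi$ has block form $\begin{bmatrix}\alpha & \beta\\ \gamma & \delta\end{bmatrix}$ with $\alpha$ of size $r\times r$ and $g = \det\alpha$. Let $\psi : A^l \to F$ ($l = q - r$) be the restriction of $\Psi$ to $\{0\}^r \oplus A^l$. Then $g\cdot F \subseteq \mathrm{im}\,\psi$. -/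
open Matrix

/-- With a presentation `A^p --Φ--> A^q --Ψ--> F → 0`, where `Φ = [[α,β],[γ,δ]]` and
`g = det α`, the restriction `ψ` of `Ψ` to `{0}^r ⊕ A^l` satisfies `g·F ⊆ im ψ`. -/
theorem stmt11 {A : Type*} [CommRing A] {r s t : ℕ}
    {F : Type*} [AddCommGroup F] [Module A F]
    (α : Matrix (Fin r) (Fin r) A) (β : Matrix (Fin r) (Fin t) A)
    (γ : Matrix (Fin s) (Fin r) A) (δ : Matrix (Fin s) (Fin t) A)
    (Ψ : ((Fin r ⊕ Fin s) → A) →ₗ[A] F) (hsurj : Function.Surjective Ψ)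
    (hker : LinearMap.ker Ψ = LinearMap.range (fromBlocks α β γ δ).mulVecLin) :
    ∀ f : F, ∃ σ : Fin s → A, α.det • f = Ψ (Sum.elim (0 : Fin r → A) σ) := by
  intro f
  obtain ⟨v, hv⟩ := hsurj f
  set v₁ : Fin r → A := v ∘ Sum.inl
  set v₂ : Fin s → A := v ∘ Sum.inr
  set w : (Fin r ⊕ Fin s) → A :=
    (fromBlocks α β γ δ).mulVec (Sum.elim (α.adjugate.mulVec v₁) 0)
  have hwker : Ψ w = 0 := by
    have : w ∈ LinearMap.ker Ψ := by
      rw [hker]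
      exact ⟨Sum.elim (α.adjugate.mulVec v₁) 0, rfl⟩
    exact this
  have hw : w = Sum.elim (α.det • v₁) (γ.mulVec (α.adjugate.mulVec v₁)) := by
    have h1 : α.mulVec (α.adjugate.mulVec v₁) = α.det • v₁ := by
      rw [mulVec_mulVec, mul_adjugate, smul_mulVec, one_mulVec]
    simp [w, fromBlocks_mulVec, h1]
  refine ⟨α.det • v₂ - γ.mulVec (α.adjugate.mulVec v₁), ?_⟩
  have hvdec : Sum.elim (0 : Fin r → A)
      (α.det • v₂ - γ.mulVec (α.adjugate.mulVec v₁)) = α.det • v - w := by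
    rw [hw]; funext x
    cases x with
    | inl i => simp [v₁]
    | inr j => simp [v₂]
  rw [hvdec, map_sub, _root_.map_smul, hv, hwker, sub_zero]
end

section
/- Let $A$ be a commutative ring, $I$ an ideal of $A$, $F$ an $A$-module with presentation $A^p \xrightarrow{\Phi} A^q \xrightarrow{\Psi} F \to 0$, where $\Phi = \begin{bmatrix}\alpha & \beta\\ \gamma & \delta\end{bmatrix}$, $\alpha$ of size $r\times r$. Suppose all $(r+1)\times(r+1)$ minors of $\Phi$ involving the first $r$ rows and columns (i.e., all entries of $(\det\alpha)\delta - \gamma\alpha^{\#}\beta$) lie in $I$. Let $\psi : A^{q-r} \to F$ be the restriction of $\Psi$ to $\{0\}^r \oplus A^{q-r}$. If moreover $A$ is a domain, $\det\alpha \neq 0$, and $I$ has the property that $(\det\alpha)\sigma \in I\cdot A^{q-r}$ implies $\sigma \in I\cdot A^{q-r}$, then $\ker\psi \subseteq I\cdot A^{q-r}$. -/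
open Matrix

/-- With a presentation `A^p --Φ--> A^q --Ψ--> F → 0`, `Φ = [[α,β],[γ,δ]]` over a domain,
if all entries of `(det α)·δ - γ·α#·β` lie in `I`, `det α ≠ 0`, and `I` allows
cancellation by `det α`, then the kernel of the restriction `ψ` of `Ψ` to
`{0}^r ⊕ A^{q-r}` is contained in `I·A^{q-r}`. -/
theorem stmt12 {A : Type*} [CommRing A] [IsDomain A] (I : Ideal A) {r s t : ℕ}
    {F : Type*} [AddCommGroup F] [Module A F]
    (α : Matrix (Fin r) (Fin r) A) (β : Matrix (Fin r) (Fin t) A)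
    (γ : Matrix (Fin s) (Fin r) A) (δ : Matrix (Fin s) (Fin t) A)
    (Ψ : ((Fin r ⊕ Fin s) → A) →ₗ[A] F) (hsurj : Function.Surjective Ψ)
    (hker : LinearMap.ker Ψ = LinearMap.range (fromBlocks α β γ δ).mulVecLin)
    (hI : ∀ i j, (α.det • δ - γ * α.adjugate * β) i j ∈ I)
    (hg : α.det ≠ 0)
    (hcancel : ∀ σ : Fin s → A, (∀ i, α.det * σ i ∈ I) → ∀ i, σ i ∈ I) :
    ∀ σ : Fin s → A, Ψ (Sum.elim (0 : Fin r → A) σ) = 0 → ∀ i, σ i ∈ I := by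
  intro σ hσ
  have hmem : Sum.elim (0 : Fin r → A) σ ∈ LinearMap.ker Ψ := hσ
  rw [hker] at hmem
  obtain ⟨x, hx⟩ := hmem
  set u : Fin r → A := x ∘ Sum.inl with hu
  set v : Fin t → A := x ∘ Sum.inr with hv
  have hxe : Sum.elim u v = x := by funext j; cases j <;> rfl
  have hx2 : fromBlocks α β γ δ *ᵥ x = Sum.elim (0 : Fin r → A) σ := hx
  rw [← hxe, fromBlocks_mulVec] at hx2
  have hx' : Sum.elim (α *ᵥ u + β *ᵥ v) (γ *ᵥ u + δ *ᵥ v) = Sum.elim (0 : Fin r → A) σ := hx2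
  have h1 : α *ᵥ u + β *ᵥ v = 0 := funext fun j => congrFun hx' (Sum.inl j)
  have h2 : γ *ᵥ u + δ *ᵥ v = σ := funext fun j => congrFun hx' (Sum.inr j)
  have hαu : α *ᵥ u = -(β *ᵥ v) := by
    have := h1; rw [add_eq_zero_iff_eq_neg] at this; exact this
  have hdetu : α.det • u = -((α.adjugate * β) *ᵥ v) := by
    calc α.det • u = (α.det • (1 : Matrix (Fin r) (Fin r) A)) *ᵥ u := by
          rw [smul_mulVec, one_mulVec]
      _ = (α.adjugate * α) *ᵥ u := by rw [adjugate_mul]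
      _ = α.adjugate *ᵥ (α *ᵥ u) := by rw [← mulVec_mulVec]
      _ = -((α.adjugate * β) *ᵥ v) := by rw [hαu, mulVec_neg, mulVec_mulVec]
  have key : α.det • σ = (α.det • δ - γ * α.adjugate * β) *ᵥ v := by
    calc α.det • σ = α.det • (γ *ᵥ u) + α.det • (δ *ᵥ v) := by
          rw [← smul_add, h2]
      _ = γ *ᵥ (α.det • u) + (α.det • δ) *ᵥ v := by
          rw [mulVec_smul, smul_mulVec]
      _ = -((γ * α.adjugate * β) *ᵥ v) + (α.det • δ) *ᵥ v := by
          rw [hdetu, mulVec_neg, mulVec_mulVec, Matrix.mul_assoc]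
      _ = (α.det • δ - γ * α.adjugate * β) *ᵥ v := by
          rw [sub_mulVec]; ring_nf
  refine hcancel σ (fun i => ?_)
  have : α.det * σ i = ((α.det • δ - γ * α.adjugate * β) *ᵥ v) i := by
    have := congrFun key i
    simpa [Pi.smul_apply, smul_eq_mul] using this
  rw [this, mulVec]
  exact Ideal.sum_mem I fun j _ => I.mul_mem_right _ (hI i j)
end

section
/- Existence part of the main theorem, algebraic core: Let $R$ be a local ring with maximal ideal $\mathfrak{m}$ and residue field $k$, $A$ an $R$-algebra which is a domain with $\mathfrak{m}A \neq A$ and such that $A/\mathfrak{m}A$ is a domain, and $F$ a finitely presented $A$-module with presentation $A^p \xrightarrow{\Phi} A^q \to F \to 0$. Let $r = \mathrm{rank}$ over $\mathrm{Frac}(A/\mathfrak{m}A)$ of the reduced matrix $\Phi_\mathfrak{m}$. Then there exist $g \in A$ with $g \notin \mathfrak{m}A$, $l = q - r$, and an $A$-module homomorphism $\psi : A^l \to F$ such that $g\cdot F \subseteq \mathrm{im}\,\psi$ and $\ker\psi \subseteq \mathfrak{m}\cdot A^l$. -/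
open Matrix IsLocalRing

lemma key_det {A : Type*} [CommRing A] {p q r : ℕ}
    (Φ : Matrix (Fin q) (Fin p) A)
    (ρ : Fin r → Fin q) (c : Fin r → Fin p) (I : Ideal A)
    (hminor_all : ∀ (rows : Fin (r + 1) → Fin q) (cols : Fin (r + 1) → Fin p),
      (Φ.submatrix rows cols).det ∈ I)
    (x : Fin p → A) (hx : ∀ i, Φ.mulVec x (ρ i) = 0) (j : Fin q) :
    (Φ.submatrix ρ c).det * Φ.mulVec x j ∈ I := by
  classical
  set C : Fin r → A := fun i =>
    (Φ.submatrix (Fin.snoc ρ j ∘ (Fin.castSucc i).succAbove) c).det with hC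
  have hrow : ∀ k, (Φ.submatrix ρ c).det * Φ j k =
      (Φ.submatrix (Fin.snoc ρ j) (Fin.snoc c k)).det
        - ∑ i : Fin r, (-1 : A) ^ ((i : ℕ) + r) * Φ (ρ i) k * C i := by
    intro k
    have h := Matrix.det_succ_column
      (Φ.submatrix (Fin.snoc ρ j) (Fin.snoc c k)) (Fin.last r)
    rw [Fin.sum_univ_castSucc] at h
    simp only [Matrix.submatrix_apply, Matrix.submatrix_submatrix,
      Fin.snoc_last, Fin.snoc_castSucc, Fin.succAbove_last, Fin.val_last,
      Fin.coe_castSucc, Fin.snoc_comp_castSucc] at h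
    have hev : ((-1 : A)) ^ (r + r) = 1 := Even.neg_one_pow ⟨r, rfl⟩
    rw [hev, one_mul] at h
    rw [h]
    ring
  have hmain : (Φ.submatrix ρ c).det * Φ.mulVec x j
      = ∑ k, (Φ.submatrix (Fin.snoc ρ j) (Fin.snoc c k)).det * x k := by
    have expand : (Φ.submatrix ρ c).det * Φ.mulVec x j
        = ∑ k, ((Φ.submatrix ρ c).det * Φ j k) * x k := by
      simp [Matrix.mulVec, dotProduct, Finset.mul_sum, mul_assoc]
    rw [expand]
    simp only [hrow, sub_mul, Finset.sum_sub_distrib]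
    have hz : ∑ k, (∑ i : Fin r, (-1 : A) ^ ((i : ℕ) + r) * Φ (ρ i) k * C i) * x k
        = 0 := by
      calc ∑ k, (∑ i : Fin r, (-1 : A) ^ ((i : ℕ) + r) * Φ (ρ i) k * C i) * x k
          = ∑ i : Fin r, (-1 : A) ^ ((i : ℕ) + r) * C i * Φ.mulVec x (ρ i) := by
            simp only [Finset.sum_mul, Matrix.mulVec, dotProduct, Finset.mul_sum]
            rw [Finset.sum_comm]
            exact Finset.sum_congr rfl fun i _ =>
              Finset.sum_congr rfl fun k _ => by ring
        _ = 0 := by simp [hx]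
    rw [hz, sub_zero]
  rw [hmain]
  exact Ideal.sum_mem _ fun k _ => I.mul_mem_right _ (hminor_all _ _)

/-- Theorem 1.1(A) in algebraic form: if `F` is presented by `A^p --Φ--> A^q → F → 0`
over a domain `A` over a local ring `R`, with `𝔪A` prime (so `A/𝔪A` is a domain, and
`𝔪A ≠ A`), and the rank of the reduced matrix `Φ_𝔪` is `r` (there is an `r × r` minor
of `Φ` outside `𝔪A`, and all `(r+1) × (r+1)` minors lie in `𝔪A`), then there exist
`g ∉ 𝔪A` and `ψ : A^{q-r} → F` with `g·F ⊆ im ψ` and `ker ψ ⊆ 𝔪·A^{q-r}`. -/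
theorem stmt13 {R : Type*} [CommRing R] [IsLocalRing R]
    {A : Type*} [CommRing A] [IsDomain A] [Algebra R A]
    [(Ideal.map (algebraMap R A) (maximalIdeal R)).IsPrime]
    {p q r : ℕ} (hrq : r ≤ q)
    (Φ : Matrix (Fin q) (Fin p) A)
    {F : Type*} [AddCommGroup F] [Module A F]
    (Ψ : (Fin q → A) →ₗ[A] F) (hsurj : Function.Surjective Ψ)
    (hker : LinearMap.ker Ψ = LinearMap.range Φ.mulVecLin)
    (hminor_ex : ∃ (rows : Fin r → Fin q) (cols : Fin r → Fin p),
      Function.Injective rows ∧ Function.Injective cols ∧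
        (Φ.submatrix rows cols).det ∉ Ideal.map (algebraMap R A) (maximalIdeal R))
    (hminor_all : ∀ (rows : Fin (r + 1) → Fin q) (cols : Fin (r + 1) → Fin p),
      (Φ.submatrix rows cols).det ∈ Ideal.map (algebraMap R A) (maximalIdeal R)) :
    ∃ g : A, g ∉ Ideal.map (algebraMap R A) (maximalIdeal R) ∧
      ∃ ψ : (Fin (q - r) → A) →ₗ[A] F,
        (∀ f : F, ∃ σ : Fin (q - r) → A, g • f = ψ σ) ∧
        (∀ σ : Fin (q - r) → A, ψ σ = 0 →
          ∀ i, σ i ∈ Ideal.map (algebraMap R A) (maximalIdeal R)) := by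
  classical
  obtain ⟨ρ, c, hρ, hc, hg⟩ := hminor_ex
  set I := Ideal.map (algebraMap R A) (maximalIdeal R) with hI
  set g := (Φ.submatrix ρ c).det with hgdef
  set s : Finset (Fin q) := Finset.univ.image ρ with hs
  have hscard : sᶜ.card = q - r := by
    rw [Finset.card_compl, hs, Finset.card_image_of_injective _ hρ,
      Finset.card_univ, Fintype.card_fin, Fintype.card_fin]
  let e : {x // x ∈ sᶜ} ≃ Fin (q - r) := sᶜ.equivFinOfCardEq hscard
  let τ : Fin (q - r) → Fin q := fun i => ((e.symm i : {x // x ∈ sᶜ}) : Fin q)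
  have hτmem : ∀ i, τ i ∈ sᶜ := fun i => (e.symm i).2
  let extL : (Fin (q - r) → A) →ₗ[A] (Fin q → A) :=
    LinearMap.pi (fun j => if h : j ∈ sᶜ then LinearMap.proj (e ⟨j, h⟩) else 0)
  have hext_apply : ∀ (σ : Fin (q - r) → A) (j : Fin q),
      extL σ j = if h : j ∈ sᶜ then σ (e ⟨j, h⟩) else 0 := by
    intro σ j
    simp only [extL, LinearMap.pi_apply]
    by_cases h : j ∈ sᶜ <;> simp [h]
  have hρmem : ∀ i, ρ i ∈ s := fun i =>
    Finset.mem_image.mpr ⟨i, Finset.mem_univ i, rfl⟩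
  have hext_rho : ∀ (σ : Fin (q - r) → A) (i : Fin r), extL σ (ρ i) = 0 := by
    intro σ i
    rw [hext_apply]
    exact dif_neg (by simp [Finset.mem_compl, hρmem i])
  have hext_tau : ∀ (σ : Fin (q - r) → A) (i : Fin (q - r)), extL σ (τ i) = σ i := by
    intro σ i
    rw [hext_apply, dif_pos (hτmem i)]
    congr 1
    have : (⟨τ i, hτmem i⟩ : {x // x ∈ sᶜ}) = e.symm i := Subtype.ext rfl
    rw [this, Equiv.apply_symm_apply]
  have hext_cover : ∀ u : Fin q → A, (∀ i, u (ρ i) = 0) →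
      extL (fun i => u (τ i)) = u := by
    intro u hu
    funext j
    rw [hext_apply]
    by_cases h : j ∈ sᶜ
    · rw [dif_pos h]
      show u (τ (e ⟨j, h⟩)) = u j
      congr 1
      show ((e.symm (e ⟨j, h⟩) : {x // x ∈ sᶜ}) : Fin q) = j
      rw [Equiv.symm_apply_apply]
    · rw [dif_neg h]
      have hjs : j ∈ s := by simpa using h
      rw [hs] at hjs
      obtain ⟨i, _, hi⟩ := Finset.mem_image.mp hjs
      rw [← hi, hu i]
  refine ⟨g, hg, Ψ ∘ₗ extL, ?_, ?_⟩
  · -- surjectivity onto g • F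
    intro f
    obtain ⟨v, rfl⟩ := hsurj f
    let vρ : Fin r → A := fun i => v (ρ i)
    let u' : Fin r → A := (Φ.submatrix ρ c).adjugate.mulVec vρ
    let w : Fin p → A := fun k => ∑ i, if c i = k then u' i else 0
    have hw : ∀ j0, Φ.mulVec w j0 = ∑ i, Φ j0 (c i) * u' i := by
      intro j0
      simp only [Matrix.mulVec, dotProduct, w, Finset.mul_sum, mul_ite, mul_zero]
      rw [Finset.sum_comm]
      refine Finset.sum_congr rfl fun i _ => ?_
      rw [Finset.sum_ite_eq]
      simp
    have hwρ : ∀ i, Φ.mulVec w (ρ i) = g * v (ρ i) := by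
      intro i
      rw [hw]
      have h1 : ∑ i', Φ (ρ i) (c i') * u' i' = (Φ.submatrix ρ c).mulVec u' i := rfl
      rw [h1]
      show (Φ.submatrix ρ c).mulVec ((Φ.submatrix ρ c).adjugate.mulVec vρ) i
        = g * v (ρ i)
      rw [Matrix.mulVec_mulVec, Matrix.mul_adjugate, Matrix.smul_mulVec,
        Matrix.one_mulVec]
      simp [vρ, hgdef]
    set u : Fin q → A := g • v - Φ.mulVec w with hu
    have hu0 : ∀ i, u (ρ i) = 0 := by
      intro i
      simp [hu, hwρ i, smul_eq_mul]
    refine ⟨fun i => u (τ i), ?_⟩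
    have : extL (fun i => u (τ i)) = u := hext_cover u hu0
    rw [LinearMap.comp_apply, this]
    have hΨw : Ψ (Φ.mulVec w) = 0 := by
      have : Φ.mulVec w ∈ LinearMap.ker Ψ := by
        rw [hker]
        exact ⟨w, rfl⟩
      exact this
    rw [hu]
    rw [map_sub, LinearMap.map_smul, hΨw, sub_zero]
  · -- kernel condition
    intro σ hσ i
    have hmemker : extL σ ∈ LinearMap.ker Ψ := hσ
    rw [hker] at hmemker
    obtain ⟨x, hxeq⟩ := hmemker
    have hxeq' : Φ.mulVec x = extL σ := hxeq
    have hx0 : ∀ i0, Φ.mulVec x (ρ i0) = 0 := fun i0 => by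
      rw [hxeq', hext_rho]
    have hmem := key_det Φ ρ c I hminor_all x hx0 (τ i)
    rw [hxeq', hext_tau] at hmem
    rcases ‹(Ideal.map (algebraMap R A) (maximalIdeal R)).IsPrime›.mem_or_mem
      hmem with h | h
    · exact absurd h hg
    · exact h
end
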